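/- Given finite reduction sequences f, g, h over a well-founded label set with the concatenation property |f·g| = |f| ∪ |g^{(f)}|, the van Oostrom measure satisfies: if (f₁·f₁', g₁·g₁') is a strictly decreasing confluence of a branching with f₁ nonempty, then |(f₁', f₂)| ≺_mul |(g₁, f₁·f₂)| for any continuation f₂ of f₁. -/

import Mathlib

/-- `reduceBy r g f = g^{(f)}`: remove from `g` every letter that is `r`-below
some letter of `f`. -/
noncomputable def reduceBy {W : Type*} (r : W → W → Prop) (g f : List W) : List W :=
  g.filter fun k => @decide (¬ ∃ j ∈ f, r k j) (Classical.propDecidable _)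

/-- Van Oostrom's lexicographic maximum measure on label words:
`|[]| = ∅` and `|i·w| = {i} ∪ |w^{(i)}|`. -/
noncomputable def meas {W : Type*} (r : W → W → Prop) : List W → Multiset W
  | [] => 0
  | i :: w => {i} + meas r (w.filter fun k => @decide (¬ r k i) (Classical.propDecidable _))
termination_by l => l.length
decreasing_by
  simpa using Nat.lt_succ_of_le ((List.length_filter_le _ w.attach).trans_eq (List.length_attach))

/-- The Dershowitz–Manna multiset extension of `r`. -/
def MulOrd {W : Type*} (r : W → W → Prop) (M N : Multiset W) : Prop :=
  ∃ X Y Z : Multiset W, M = Z + X ∧ N = Z + Y ∧ Y ≠ 0 ∧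
    ∀ x ∈ X, ∃ y ∈ Y, r x y

/-!
Since `hconcat` holds for all words, `r` is transitive, so the letters lying below no letter
of `f₁` form an upward closed set, and taking the measure commutes with filtering by such a set.
Hence `|f₂^{(f₁)}|` is exactly the part of `|f₂|` outside the down-closure of `f₁`, and it
cancels on both sides. What remains on the left, `|f₁'|` and the rest of `|f₂|`, consists of
letters below letters of `f₁`, each of which is dominated by an element of `|f₁|`; this
multiset is nonempty because `f₁` is.
-/

section
variable {W : Type*} (r : W → W → Prop)

@[simp]
theorem meas_nil : meas r [] = 0 := by
  rw [meas.eq_1]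

theorem meas_cons (i : W) (w : List W) :
    meas r (i :: w) =
      {i} + meas r (w.filter fun k => @decide (¬ r k i) (Classical.propDecidable _)) := by
  rw [meas.eq_2]

@[elab_as_elim]
theorem meas_induction {motive : List W → Prop} (nil : motive [])
    (cons : ∀ i w,
      motive (w.filter fun k => @decide (¬ r k i) (Classical.propDecidable _)) → motive (i :: w))
    (w : List W) : motive w := by
  induction w using meas.induct r with
  | case1 => exact nil
  | case2 i w ih =>
    refine cons i w ?_
    rwa [List.unattach_filter (hf := fun _ _ => rfl), List.unattach_attach] at ih

theorem mem_of_mem_meas {w : List W} {x : W} (hx : x ∈ meas r w) : x ∈ w := by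
  induction w using meas_induction r with
  | nil => simp at hx
  | cons i w ih =>
    rw [meas_cons, Multiset.mem_add] at hx
    rcases hx with hx | hx
    · simp_all
    · exact List.mem_cons_of_mem i (List.mem_of_mem_filter (ih hx))

theorem exists_mem_meas_reflGen {w : List W} {j : W} (hj : j ∈ w) :
    ∃ y ∈ meas r w, Relation.ReflGen r j y := by
  induction w using meas_induction r with
  | nil => simp at hj
  | cons i w ih =>
    by_cases hji : j = i ∨ r j i
    · refine ⟨i, by simp [meas_cons], ?_⟩
      rcases hji with rfl | hji
      exacts [Relation.ReflGen.refl, Relation.ReflGen.single hji]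
    · push Not at hji
      obtain ⟨y, hy, hjy⟩ :=
        ih (List.mem_filter.mpr ⟨(List.mem_cons.mp hj).resolve_left hji.1, by simp [hji.2]⟩)
      exact ⟨y, by rw [meas_cons]; exact Multiset.mem_add.mpr (Or.inr hy), hjy⟩

theorem meas_filter (q : W → Bool) (hq : ∀ ⦃k j⦄, r k j → q k → q j) (w : List W) :
    meas r (w.filter q) = (meas r w).filter (q · = true) := by
  induction w using meas_induction r with
  | nil => simp
  | cons i w ih =>
    by_cases hqi : q i
    · rw [List.filter_cons_of_pos hqi, meas_cons, meas_cons, List.filter_comm, ih,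
        Multiset.filter_add, Multiset.filter_singleton, if_pos hqi]
    · have hq_not_below : ∀ k, q k → ¬ r k i := fun k hk hki => hqi (hq hki hk)
      rw [List.filter_cons_of_neg hqi, meas_cons, Multiset.filter_add, Multiset.filter_singleton,
        if_neg hqi, Multiset.empty_eq_zero, zero_add, ← ih, List.filter_comm]
      congr 1
      refine (List.filter_eq_self.mpr fun k hk => ?_).symm
      simpa using hq_not_below k (List.mem_filter.mp hk).2

theorem isTrans_of_meas_append
    (hconcat : ∀ f g : List W, meas r (f ++ g) = meas r f + meas r (reduceBy r g f)) :
    IsTrans W r := by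
  refine ⟨fun a b c hab hbc => ?_⟩
  by_contra hac
  -- `|c b a| = {c, a}`, whereas `|c b| + |a^{(c b)}| = {c}` since `r a b`.
  have h := congrArg Multiset.card (hconcat [c, b] [a])
  simp [meas_cons, reduceBy, hab, hbc, hac] at h

open Classical in
theorem meas_reduceBy [IsTrans W r] (g f : List W) :
    meas r (reduceBy r g f) = (meas r g).filter fun k => ¬ ∃ j ∈ f, r k j := by
  rw [reduceBy, meas_filter]
  · simp only [decide_eq_true_eq]
  · simp only [decide_eq_true_eq, not_exists, not_and]
    exact fun k j hkj hk l hl hjl => hk l hl (trans_of r hkj hjl)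

end

theorem measure_lemma_general {W : Type*} (r : W → W → Prop)
    (hconcat : ∀ f g : List W, meas r (f ++ g) = meas r f + meas r (reduceBy r g f))
    (f₁ f₁' g₁ f₂ : List W)
    (hne : f₁ ≠ [])
    (hf : ∀ k' ∈ f₁', ∀ k ∈ f₁, r k' k) :
    MulOrd r (meas r f₁' + meas r f₂) (meas r g₁ + meas r (f₁ ++ f₂)) := by
  classical
  have := isTrans_of_meas_append r hconcat
  obtain ⟨i, t, rfl⟩ := List.exists_cons_of_ne_nil hne
  have hi : i ∈ meas r (i :: t) := by simp [meas_cons]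
  set below : W → Prop := fun k => ∃ j ∈ i :: t, r k j
  refine ⟨meas r f₁' + (meas r f₂).filter below, meas r g₁ + meas r (i :: t),
    (meas r f₂).filter (¬ below ·), ?_, ?_, ?_, ?_⟩
  · conv_lhs => rw [← Multiset.filter_add_not below (meas r f₂)]
    abel
  · rw [hconcat, meas_reduceBy r]
    abel
  · simp [meas_cons]
  · intro x hx
    rcases Multiset.mem_add.mp hx with hx | hx
    · exact ⟨i, Multiset.mem_add.mpr (Or.inr hi), hf x (mem_of_mem_meas r hx) i (by simp)⟩
    · obtain ⟨j, hj, hxj⟩ := (Multiset.mem_filter.mp hx).2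
      obtain ⟨y, hy, hjy⟩ := exists_mem_meas_reflGen r hj
      refine ⟨y, Multiset.mem_add.mpr (Or.inr hy), ?_⟩
      cases hjy with
      | refl => exact hxj
      | single hjy => exact trans_of r hxj hjy

/-- Van Oostrom's measure lemma: if `(f₁·f₁', g₁·g₁')` is a strictly decreasing
confluence of a branching with `f₁` nonempty, then for any continuation `f₂` of
`f₁` we have `|(f₁', f₂)| ≺_mul |(g₁, f₁·f₂)|` (sequences being identified with
their label words, and `|(f,g)| = |f| ∪ |g|`). -/
theorem measure_lemma {W : Type*} (r : W → W → Prop) (hwf : WellFounded r)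
    (hconcat : ∀ f g : List W, meas r (f ++ g) = meas r f + meas r (reduceBy r g f))
    (f₁ f₁' g₁ g₁' f₂ : List W)
    (hne : f₁ ≠ [])
    (hf : ∀ k' ∈ f₁', ∀ k ∈ f₁, r k' k)
    (hg : ∀ l' ∈ g₁', ∀ l ∈ g₁, r l' l) :
    MulOrd r (meas r f₁' + meas r f₂) (meas r g₁ + meas r (f₁ ++ f₂)) :=
  measure_lemma_general r hconcat f₁ f₁' g₁ f₂ hne hf
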